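/- Let Ω ⊆ ℝⁿ be a nonempty closed convex set and let T : ℝⁿ ⇉ ℝⁿ be maximal monotone with dom T = Ω. Then sol(T,Ω) is nonempty and bounded if and only if for every w ∈ Ω^∞ \ {0} there exist x ∈ Ω and v ∈ T(x) with ⟨v, w⟩ > 0. (If Ω is bounded then Ω^∞ = {0} and the condition holds trivially.) -/

import Mathlib

/-
By maximality, a point `v` lies in `T x` as soon as `⟪v - w, x - y⟫ ≥ 0` for every `w ∈ T y`; hence
the strong solutions are exactly the zeros of `T`, and the graph of `T` is closed.

If a nonzero recession direction `w` satisfies `⟪v, w⟫ ≤ 0` on the whole graph, zeros propagate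
along the ray `x + τ • w`, so a bounded nonempty zero set rules such `w` out.

Conversely, Minty's theorem gives `x_ε` with `-ε • x_ε ∈ T x_ε` for every `ε > 0`; in finite
dimension it follows from the Fitzpatrick function `F(x, v) = ⨆_{w ∈ T y} ⟪w, x⟫ + ⟪v, y⟫ - ⟪w, y⟫`,
which dominates `⟪x, v⟫` and equals it on the graph: the proximal point `(x, v)` of `0` for `F`
satisfies `v = -x ∈ T x`. Monotonicity against a graph point `(y, u)` bounds `⟪u, ·⟫` from above
on the `x_ε` with `ε ≤ 1` and on the zeros. Were these sets unbounded, a normalized subsequence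
would converge to a nonzero recession direction `w` with `⟪u, w⟫ ≤ 0` for every `u` in the range
of `T`, against the hypothesis. A limit point of `x_ε` as `ε → 0` is then a zero of `T`.
-/

open Set
open scoped InnerProductSpace Pointwise
open Filter Topology

section Prox

variable {H : Type*} [NormedAddCommGroup H] [InnerProductSpace ℝ H] [FiniteDimensional ℝ H]
  {ι : Type*} [Nonempty ι] (c : ι → H) (d : ι → ℝ)

theorem exists_min_iSup_affine_add_half_sq {z₀ : H} {M : ℝ}
    (hM : ∀ i, ⟪c i, z₀⟫_ℝ + d i ≤ M) :
    ∃ zb m₀, (∀ i, ⟪c i, zb⟫_ℝ + d i + ‖zb‖ ^ 2 / 2 ≤ m₀) ∧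
      ∀ z m, (∀ i, ⟪c i, z⟫_ℝ + d i + ‖z‖ ^ 2 / 2 ≤ m) → m₀ ≤ m := by
  obtain ⟨i₀⟩ := ‹Nonempty ι›
  set A : Set (H × ℝ) := {p | ∀ i, ⟪c i, p.1⟫_ℝ + d i + ‖p.1‖ ^ 2 / 2 ≤ p.2}
  set m₁ := M + ‖z₀‖ ^ 2 / 2 with hm₁
  have hz₀ : (z₀, m₁) ∈ A := fun i => show _ ≤ m₁ by linarith [hM i]
  have hA : IsClosed A := by
    simp only [A, ofPred_forall]
    exact isClosed_iInter fun i => isClosed_le (by fun_prop) continuous_snd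
  have hbdd : Bornology.IsBounded (A ∩ {p | p.2 ≤ m₁}) := by
    set K := 2 * (m₁ - d i₀) + ‖c i₀‖ ^ 2 with hK
    refine ((Metric.isBounded_closedBall (x := -c i₀) (r := √K)).prod
      (Metric.isBounded_Icc (d i₀ - ‖c i₀‖ ^ 2 / 2) m₁)).subset ?_
    rintro ⟨z, m⟩ ⟨hzA, hm⟩
    -- completing the square: ⟪c, z⟫ + ‖z‖²/2 = ‖z + c‖²/2 - ‖c‖²/2
    have hsq := norm_add_sq_real z (c i₀)
    rw [real_inner_comm (c i₀) z] at hsq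
    have hzc := hzA i₀
    simp only [mem_ofPred_eq] at hzc hm
    have hK' : ‖z + c i₀‖ ^ 2 ≤ K := by rw [hK]; linarith
    refine ⟨?_, ?_, hm⟩
    · rw [Metric.mem_closedBall, dist_eq_norm, sub_neg_eq_add,
        Real.le_sqrt (norm_nonneg _) ((sq_nonneg _).trans hK')]
      exact hK'
    · nlinarith [norm_nonneg (z + c i₀)]
  obtain ⟨p, hp, hmin⟩ := (Metric.isCompact_of_isClosed_isBounded
    (hA.inter (isClosed_le continuous_snd continuous_const)) hbdd).exists_isMinOn
    ⟨_, hz₀, (le_refl m₁ : (z₀, m₁).2 ≤ m₁)⟩ continuous_snd.continuousOn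
  refine ⟨p.1, p.2, hp.1, fun z m hm => ?_⟩
  by_cases h : m ≤ m₁
  · exact hmin (show (z, m) ∈ A ∩ {p | p.2 ≤ m₁} from ⟨hm, h⟩)
  · exact hp.2.trans (not_le.mp h).le

/-- `zb` is the proximal point of `0` for `F = ⨆ i, ⟪c i, ·⟫ + d i`, `fb = F zb`, and the second
clause says that `-zb` is a subgradient of `F` at `zb`. -/
theorem exists_prox_iSup_affine {z₀ : H} {M : ℝ} (hM : ∀ i, ⟪c i, z₀⟫_ℝ + d i ≤ M) :
    ∃ zb fb, (∀ i, ⟪c i, zb⟫_ℝ + d i ≤ fb) ∧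
      ∀ z m, (∀ i, ⟪c i, z⟫_ℝ + d i ≤ m) → fb - ⟪zb, z - zb⟫_ℝ ≤ m := by
  obtain ⟨zb, m₀, hzb, hmin⟩ := exists_min_iSup_affine_add_half_sq c d hM
  refine ⟨zb, m₀ - ‖zb‖ ^ 2 / 2, fun i => by linarith [hzb i], fun z m hm => ?_⟩
  set fb := m₀ - ‖zb‖ ^ 2 / 2 with hfb
  set a := m - fb + ⟪zb, z - zb⟫_ℝ with ha
  -- compare with the convex combination `zb + t • (z - zb)` and let `t → 0⁺`
  have key : ∀ t ∈ Ioc (0 : ℝ) 1, 0 ≤ a + t * (‖z - zb‖ ^ 2 / 2) := by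
    rintro t ⟨ht0, ht1⟩
    have hcomb : ∀ i, ⟪c i, zb + t • (z - zb)⟫_ℝ + d i =
        (1 - t) * (⟪c i, zb⟫_ℝ + d i) + t * (⟪c i, z⟫_ℝ + d i) := fun i => by
      rw [inner_add_right, real_inner_smul_right, inner_sub_right]; ring
    have h := hmin (zb + t • (z - zb)) ((1 - t) * fb + t * m + ‖zb + t • (z - zb)‖ ^ 2 / 2)
      fun i => by
        rw [hcomb]
        have := mul_le_mul_of_nonneg_left (show ⟪c i, zb⟫_ℝ + d i ≤ fb by linarith [hzb i])
          (sub_nonneg.mpr ht1)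
        nlinarith [hm i]
    rw [norm_add_sq_real, norm_smul, real_inner_smul_right, Real.norm_of_nonneg ht0.le] at h
    refine le_of_mul_le_mul_left ?_ ht0
    linarith
  have hlim : Tendsto (fun t : ℝ => a + t * (‖z - zb‖ ^ 2 / 2)) (𝓝[>] 0) (𝓝 a) :=
    ((Continuous.tendsto' (by fun_prop) 0 a (by simp))).mono_left nhdsWithin_le_nhds
  have := ge_of_tendsto hlim (eventually_of_mem (Ioc_mem_nhdsGT one_pos) key)
  linarith

end Prox

variable {E : Type*} [NormedAddCommGroup E] [InnerProductSpace ℝ E]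

section Recession

def recessionCone {M : Type*} [AddCommMonoid M] [Module ℝ M] (Ω : Set M) : Set M :=
  {w | ∀ x ∈ Ω, ∀ τ : ℝ, 0 ≤ τ → x + τ • w ∈ Ω}

variable {F : Type*} [NormedAddCommGroup F] [NormedSpace ℝ F]

theorem Bornology.IsBounded.eq_zero_of_add_smul_mem {s : Set F} (hs : Bornology.IsBounded s)
    {x w : F} (h : ∀ τ : ℝ, 0 ≤ τ → x + τ • w ∈ s) : w = 0 := by
  obtain ⟨C, hC⟩ := isBounded_iff_forall_norm_le.mp hs
  by_contra hw
  have hpos := norm_pos_iff.mpr hw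
  set τ := (C + ‖x‖ + 1) / ‖w‖
  have hC₀ : 0 ≤ C := (norm_nonneg _).trans (hC _ (h 0 le_rfl))
  have hτ : 0 ≤ τ := by positivity
  have hτw : ‖τ • w‖ = C + ‖x‖ + 1 := by
    rw [norm_smul, Real.norm_of_nonneg hτ, div_mul_cancel₀ _ hpos.ne']
  have := norm_sub_le (x + τ • w) x
  rw [add_sub_cancel_left, hτw] at this
  linarith [hC _ (h τ hτ)]

theorem mem_recessionCone_of_tendsto {Ω : Set F} (hcl : IsClosed Ω) (hconv : Convex ℝ Ω)
    {ι : Type*} {l : Filter ι} [l.NeBot] {x : ι → F} (hx : ∀ i, x i ∈ Ω)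
    (hnorm : Tendsto (fun i => ‖x i‖) l atTop) {w : F}
    (hw : Tendsto (fun i => ‖x i‖⁻¹ • x i) l (𝓝 w)) : w ∈ recessionCone Ω := by
  intro z hz τ hτ
  have hθ : Tendsto (fun i => τ * ‖x i‖⁻¹) l (𝓝 0) := by
    simpa using hnorm.inv_tendsto_atTop.const_mul τ
  -- `z + θ • (x i - z)` with `θ = τ / ‖x i‖` lies in `Ω` once `θ ≤ 1`
  have hlim : Tendsto (fun i => z + (τ * ‖x i‖⁻¹) • (x i - z)) l (𝓝 (z + τ • w)) := by
    have := tendsto_const_nhds (x := z) |>.add ((hw.const_smul τ).sub (hθ.smul_const z))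
    simp only [zero_smul, sub_zero] at this
    refine this.congr fun i => ?_
    rw [smul_sub, smul_smul]
  refine hcl.mem_of_tendsto hlim ?_
  filter_upwards [hnorm.eventually_ge_atTop τ, hnorm.eventually_gt_atTop 0] with i hi hi₀
  refine hconv.add_smul_sub_mem hz (hx i) ⟨by positivity, ?_⟩
  rw [← div_eq_mul_inv]
  exact div_le_one_of_le₀ hi hi₀.le

theorem exists_tendsto_inv_norm_smul [FiniteDimensional ℝ F] {x : ℕ → F}
    (hnorm : Tendsto (fun k => ‖x k‖) atTop atTop) :
    ∃ φ : ℕ → ℕ, StrictMono φ ∧ ∃ w : F, ‖w‖ = 1 ∧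
      Tendsto (fun j => ‖x (φ j)‖⁻¹ • x (φ j)) atTop (𝓝 w) := by
  have hball : ∀ k, ‖x k‖⁻¹ • x k ∈ Metric.closedBall (0 : F) 1 := fun k => by
    rw [mem_closedBall_zero_iff, norm_smul, norm_inv, norm_norm]
    exact inv_mul_le_one_of_le₀ le_rfl (norm_nonneg _)
  obtain ⟨w, -, φ, hφ, hw⟩ := (isCompact_closedBall (0 : F) 1).tendsto_subseq hball
  refine ⟨φ, hφ, w, tendsto_nhds_unique hw.norm ?_, hw⟩
  refine tendsto_const_nhds.congr' ?_
  filter_upwards [(hnorm.comp hφ.tendsto_atTop).eventually_gt_atTop 0] with j hj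
  simp only [Function.comp_apply] at hj ⊢
  rw [norm_smul, norm_inv, norm_norm, inv_mul_cancel₀ hj.ne']

theorem inner_nonpos_of_tendsto_inv_norm_smul {ι : Type*} {l : Filter ι} [l.NeBot] {x : ι → E}
    {u w : E} {C : ℝ} (hC : ∀ i, ⟪u, x i⟫_ℝ ≤ C) (hnorm : Tendsto (fun i => ‖x i‖) l atTop)
    (hw : Tendsto (fun i => ‖x i‖⁻¹ • x i) l (𝓝 w)) : ⟪u, w⟫_ℝ ≤ 0 := by
  refine le_of_tendsto_of_tendsto (tendsto_const_nhds.inner hw)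
    (by simpa using hnorm.inv_tendsto_atTop.mul_const C) (Eventually.of_forall fun i => ?_)
  change ⟪u, ‖x i‖⁻¹ • x i⟫_ℝ ≤ _
  rw [real_inner_smul_right]
  exact mul_le_mul_of_nonneg_left (hC i) (inv_nonneg.mpr (norm_nonneg _))

theorem isBounded_of_forall_mem_recessionCone [FiniteDimensional ℝ E] {Ω S : Set E}
    (hcl : IsClosed Ω) (hconv : Convex ℝ Ω) (hS : S ⊆ Ω)
    (h : ∀ w ∈ recessionCone Ω, w ≠ 0 → ∃ u, (∃ C, ∀ x ∈ S, ⟪u, x⟫_ℝ ≤ C) ∧ 0 < ⟪u, w⟫_ℝ) :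
    Bornology.IsBounded S := by
  by_contra hunb
  rw [isBounded_iff_forall_norm_le] at hunb
  push Not at hunb
  choose x hxS hx using fun k : ℕ => hunb k
  have hnorm : Tendsto (fun k => ‖x k‖) atTop atTop :=
    tendsto_atTop_mono (fun k => (hx k).le) tendsto_natCast_atTop_atTop
  obtain ⟨φ, hφ, w, hw₁, hw⟩ := exists_tendsto_inv_norm_smul hnorm
  have hnormφ := hnorm.comp hφ.tendsto_atTop
  obtain ⟨u, ⟨C, hC⟩, hpos⟩ := h w
    (mem_recessionCone_of_tendsto hcl hconv (fun j => hS (hxS (φ j))) hnormφ hw)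
    (by rintro rfl; simp at hw₁)
  exact hpos.not_ge (inner_nonpos_of_tendsto_inv_norm_smul (fun j => hC _ (hxS (φ j))) hnormφ hw)

end Recession

def IsMonotoneOperator (T : E → Set E) : Prop :=
  ∀ x y v w, v ∈ T x → w ∈ T y → 0 ≤ ⟪v - w, x - y⟫_ℝ

def IsMaximalMonotoneOperator (T : E → Set E) : Prop :=
  IsMonotoneOperator T ∧
    ∀ T' : E → Set E, IsMonotoneOperator T' → (∀ x, T x ⊆ T' x) → ∀ x, T' x = T x

namespace IsMaximalMonotoneOperator

variable {T : E → Set E}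

theorem mem_of_forall_inner_nonneg (hT : IsMaximalMonotoneOperator T) {x v : E}
    (h : ∀ y w, w ∈ T y → 0 ≤ ⟪v - w, x - y⟫_ℝ) : v ∈ T x := by
  set T' : E → Set E := fun y => {u | u ∈ T y ∨ (y = x ∧ u = v)}
  have hT' : IsMonotoneOperator T' := by
    rintro a b p q (hp | ⟨rfl, rfl⟩) (hq | ⟨rfl, rfl⟩)
    · exact hT.1 a b p q hp hq
    · simpa only [← neg_sub p, ← neg_sub a, inner_neg_neg] using h a p hp
    · exact h b q hq
    · simp
  have hx := hT.2 T' hT' (fun y u hu => Or.inl hu) x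
  exact hx ▸ Or.inr ⟨rfl, rfl⟩

theorem _root_.isMaximalMonotoneOperator_iff :
    IsMaximalMonotoneOperator T ↔ IsMonotoneOperator T ∧
      ∀ x v, (∀ y w, w ∈ T y → 0 ≤ ⟪v - w, x - y⟫_ℝ) → v ∈ T x := by
  refine ⟨fun hT => ⟨hT.1, fun x v => hT.mem_of_forall_inner_nonneg⟩,
    fun ⟨hmono, hmax⟩ => ⟨hmono, fun T' hT' hsub x => ?_⟩⟩
  refine Subset.antisymm (fun v hv => hmax x v fun y w hw => ?_) (hsub x)
  exact hT' x y v w hv (hsub y hw)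

theorem exists_mem (hT : IsMaximalMonotoneOperator T) : ∃ x v, v ∈ T x := by
  by_contra! h
  exact h 0 0 (hT.mem_of_forall_inner_nonneg fun y w hw => (h y w hw).elim)

/-- The Fitzpatrick function of `T` dominates the duality pairing. -/
theorem inner_le_of_forall_le (hT : IsMaximalMonotoneOperator T) {x v : E} {m : ℝ}
    (h : ∀ y w, w ∈ T y → ⟪w, x⟫_ℝ + ⟪v, y⟫_ℝ - ⟪w, y⟫_ℝ ≤ m) : ⟪x, v⟫_ℝ ≤ m := by
  by_contra! hm
  have hv : v ∈ T x := hT.mem_of_forall_inner_nonneg fun y w hw => by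
    have := h y w hw
    simp only [inner_sub_left, inner_sub_right, real_inner_comm x v, real_inner_comm x w] at *
    linarith
  linarith [h x v hv, real_inner_comm x v]

theorem smul (hT : IsMaximalMonotoneOperator T) {c : ℝ} (hc : 0 < c) :
    IsMaximalMonotoneOperator fun x => c • T x := by
  rw [isMaximalMonotoneOperator_iff]
  refine ⟨?_, fun x p hp => ?_⟩
  · rintro x y _ _ ⟨v, hv, rfl⟩ ⟨w, hw, rfl⟩
    rw [← smul_sub, real_inner_smul_left]
    exact mul_nonneg hc.le (hT.1 x y v w hv hw)
  · refine ⟨c⁻¹ • p, hT.mem_of_forall_inner_nonneg fun y w hw => ?_, smul_inv_smul₀ hc.ne' p⟩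
    have h := hp y (c • w) ⟨w, hw, rfl⟩
    rw [← inv_smul_smul₀ hc.ne' w, ← smul_sub, real_inner_smul_left]
    exact mul_nonneg (inv_nonneg.mpr hc.le) h

theorem exists_neg_mem [FiniteDimensional ℝ E] (hT : IsMaximalMonotoneOperator T) :
    ∃ x, -x ∈ T x := by
  obtain ⟨y₀, w₀, hw₀⟩ := hT.exists_mem
  let G := {p : E × E // p.2 ∈ T p.1}
  have : Nonempty G := ⟨⟨(y₀, w₀), hw₀⟩⟩
  -- the Fitzpatrick function of `T` is a supremum of affine functions on the L² product `E × E`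
  have hF : ∀ (g : G) (x v : E), ⟪WithLp.toLp 2 (g.1.2, g.1.1), WithLp.toLp 2 (x, v)⟫_ℝ +
      -⟪g.1.2, g.1.1⟫_ℝ = ⟪g.1.2, x⟫_ℝ + ⟪v, g.1.1⟫_ℝ - ⟪g.1.2, g.1.1⟫_ℝ := fun g x v => by
    rw [WithLp.prod_inner_apply, real_inner_comm v]; ring
  have hle : ∀ y w, w ∈ T y → ∀ g : G,
      ⟪g.1.2, y⟫_ℝ + ⟪w, g.1.1⟫_ℝ - ⟪g.1.2, g.1.1⟫_ℝ ≤ ⟪y, w⟫_ℝ := fun y w hw g => by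
    have := hT.1 y g.1.1 w g.1.2 hw g.2
    simp only [inner_sub_right, real_inner_comm y, real_inner_comm g.1.1] at *
    linarith
  obtain ⟨zb, fb, hzb, hsub⟩ := exists_prox_iSup_affine (fun g : G => WithLp.toLp 2 (g.1.2, g.1.1))
    (fun g => -⟪g.1.2, g.1.1⟫_ℝ) (z₀ := WithLp.toLp 2 (y₀, w₀))
    fun g => (hF g y₀ w₀).trans_le (hle y₀ w₀ hw₀ g)
  obtain ⟨⟨xb, vb⟩, rfl⟩ : ∃ p, WithLp.toLp 2 p = zb := ⟨zb.ofLp, rfl⟩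
  have hfb : ⟪xb, vb⟫_ℝ ≤ fb :=
    hT.inner_le_of_forall_le fun y w hw => (hF ⟨(y, w), hw⟩ xb vb).symm.trans_le (hzb _)
  have hsubgrad : ∀ y w, w ∈ T y → fb - (⟪xb, y - xb⟫_ℝ + ⟪vb, w - vb⟫_ℝ) ≤ ⟪y, w⟫_ℝ :=
    fun y w hw => by
      simpa using hsub (WithLp.toLp 2 (y, w)) ⟪y, w⟫_ℝ fun g => (hF g y w).trans_le (hle y w hw g)
  have key : ∀ y w, w ∈ T y → ‖xb + vb‖ ^ 2 ≤ ⟪-xb - w, -vb - y⟫_ℝ := fun y w hw => by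
    have h := hsubgrad y w hw
    rw [inner_sub_right, inner_sub_right, real_inner_self_eq_norm_sq,
      real_inner_self_eq_norm_sq] at h
    have e : ⟪-xb - w, -vb - y⟫_ℝ = ⟪xb, vb⟫_ℝ + ⟪xb, y⟫_ℝ + ⟪vb, w⟫_ℝ + ⟪y, w⟫_ℝ := by
      rw [← neg_add', ← neg_add', inner_neg_neg, inner_add_left, inner_add_right,
        inner_add_right, real_inner_comm w vb, real_inner_comm w y]
      ring
    rw [norm_add_sq_real, e]
    linarith
  have hmem : -xb ∈ T (-vb) :=
    hT.mem_of_forall_inner_nonneg fun y w hw => (sq_nonneg _).trans (key y w hw)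
  have hsum : xb + vb = 0 := by simpa using key _ _ hmem
  rw [add_eq_zero_iff_eq_neg] at hsum
  subst hsum
  exact ⟨-vb, hmem⟩

theorem exists_neg_smul_mem [FiniteDimensional ℝ E] (hT : IsMaximalMonotoneOperator T) {ε : ℝ}
    (hε : 0 < ε) : ∃ x, -(ε • x) ∈ T x := by
  obtain ⟨x, u, hu, hux⟩ := (hT.smul (inv_pos.mpr hε)).exists_neg_mem
  have hux' : -(ε • x) = u := by rw [← smul_neg, ← hux, smul_inv_smul₀ hε.ne']
  exact ⟨x, hux' ▸ hu⟩

theorem mem_of_tendsto (hT : IsMaximalMonotoneOperator T) {ι : Type*} {l : Filter ι} [l.NeBot]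
    {x v : ι → E} {x₀ v₀ : E} (hx : Tendsto x l (𝓝 x₀)) (hv : Tendsto v l (𝓝 v₀))
    (hmem : ∀ i, v i ∈ T (x i)) : v₀ ∈ T x₀ :=
  hT.mem_of_forall_inner_nonneg fun y w hw =>
    ge_of_tendsto ((hv.sub_const w).inner (hx.sub_const y))
      (Eventually.of_forall fun i => hT.1 _ _ _ _ (hmem i) hw)

theorem zero_mem_add_smul (hT : IsMaximalMonotoneOperator T) {x w : E} (hx : 0 ∈ T x)
    (hw : ∀ y u, u ∈ T y → ⟪u, w⟫_ℝ ≤ 0) {τ : ℝ} (hτ : 0 ≤ τ) : 0 ∈ T (x + τ • w) :=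
  hT.mem_of_forall_inner_nonneg fun y u hu => calc
    0 ≤ ⟪0 - u, x - y⟫_ℝ + τ * -⟪u, w⟫_ℝ :=
      add_nonneg (hT.1 x y 0 u hx hu) (mul_nonneg hτ (neg_nonneg.mpr (hw y u hu)))
    _ = ⟪0 - u, x + τ • w - y⟫_ℝ := by
      rw [add_sub_right_comm, inner_add_right, inner_smul_right, zero_sub, inner_neg_left,
        inner_neg_left]

theorem zero_mem_iff (hT : IsMaximalMonotoneOperator T) {Ω : Set E}
    (hdom : {x | (T x).Nonempty} ⊆ Ω) {x : E} :
    (x ∈ Ω ∧ ∃ v ∈ T x, ∀ z ∈ Ω, 0 ≤ ⟪v, z - x⟫_ℝ) ↔ 0 ∈ T x := by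
  refine ⟨fun ⟨_, v, hv, hvi⟩ => hT.mem_of_forall_inner_nonneg fun y w hw => ?_,
    fun h => ⟨hdom ⟨0, h⟩, 0, h, by simp⟩⟩
  calc 0 ≤ ⟪w - v, y - x⟫_ℝ + ⟪v, y - x⟫_ℝ := add_nonneg (hT.1 y x w v hw hv) (hvi y (hdom ⟨w, hw⟩))
    _ = ⟪0 - w, x - y⟫_ℝ := by
      rw [← inner_add_left, sub_add_cancel, ← neg_sub y x, inner_neg_right, zero_sub,
        inner_neg_left, neg_neg]

end IsMaximalMonotoneOperator

theorem IsMonotoneOperator.inner_le_of_neg_smul_mem {T : E → Set E} (hT : IsMonotoneOperator T)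
    {x y u : E} {ε : ℝ} (hε₀ : 0 ≤ ε) (hε₁ : ε ≤ 1) (hx : -(ε • x) ∈ T x) (hu : u ∈ T y) :
    ⟪u, x⟫_ℝ ≤ ⟪u, y⟫_ℝ + ‖y‖ ^ 2 / 4 := by
  have h := hT x y _ u hx hu
  rw [inner_sub_left, inner_neg_left, real_inner_smul_left, inner_sub_right, inner_sub_right,
    real_inner_self_eq_norm_sq] at h
  have hsq : 0 ≤ ‖x‖ ^ 2 - ⟪x, y⟫_ℝ + ‖y‖ ^ 2 / 4 := by
    have := norm_sub_sq_real x ((1 / 2 : ℝ) • y)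
    rw [norm_smul, real_inner_smul_right] at this
    norm_num at this
    nlinarith [norm_nonneg (x - (1 / 2 : ℝ) • y)]
  nlinarith [mul_nonneg hε₀ hsq, sq_nonneg ‖y‖]

theorem IsMonotoneOperator.isBounded_setOf_neg_smul_mem [FiniteDimensional ℝ E]
    {T : E → Set E} (hT : IsMonotoneOperator T) {Ω : Set E} (hcl : IsClosed Ω)
    (hconv : Convex ℝ Ω) (hdom : {x | (T x).Nonempty} ⊆ Ω)
    (h : ∀ w ∈ recessionCone Ω, w ≠ 0 → ∃ x ∈ Ω, ∃ v ∈ T x, 0 < ⟪v, w⟫_ℝ) :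
    Bornology.IsBounded {x | ∃ ε ∈ Icc (0 : ℝ) 1, -(ε • x) ∈ T x} := by
  refine isBounded_of_forall_mem_recessionCone hcl hconv (fun x ⟨_, _, hx⟩ => hdom ⟨_, hx⟩)
    fun w hw hw₀ => ?_
  obtain ⟨y, -, u, hu, hpos⟩ := h w hw hw₀
  exact ⟨u, ⟨_, fun x ⟨_, ⟨hε₀, hε₁⟩, hx⟩ => hT.inner_le_of_neg_smul_mem hε₀ hε₁ hx hu⟩, hpos⟩

theorem IsMaximalMonotoneOperator.exists_zero_mem [FiniteDimensional ℝ E] {T : E → Set E}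
    (hT : IsMaximalMonotoneOperator T)
    (hb : Bornology.IsBounded {x | ∃ ε ∈ Icc (0 : ℝ) 1, -(ε • x) ∈ T x}) : ∃ x, 0 ∈ T x := by
  choose x hx using fun k : ℕ => hT.exists_neg_smul_mem (Nat.one_div_pos_of_nat (α := ℝ) (n := k))
  obtain ⟨x₀, -, φ, hφ, hlim⟩ := tendsto_subseq_of_bounded hb fun k =>
    ⟨_, ⟨Nat.one_div_pos_of_nat.le, div_le_one_of_le₀ (by simp) (by positivity)⟩, hx k⟩
  have hε := (tendsto_one_div_add_atTop_nhds_zero_nat (𝕜 := ℝ)).comp hφ.tendsto_atTop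
  exact ⟨x₀, hT.mem_of_tendsto hlim (by simpa using (hε.smul hlim).neg) fun j => hx (φ j)⟩

theorem gvi_sol_nonempty_bounded_iff {n : ℕ}
    (Ω : Set (EuclideanSpace ℝ (Fin n)))
    (hcl : IsClosed Ω) (hconv : Convex ℝ Ω)
    (T : EuclideanSpace ℝ (Fin n) → Set (EuclideanSpace ℝ (Fin n)))
    (hmono : ∀ x y v w, v ∈ T x → w ∈ T y → 0 ≤ ⟪v - w, x - y⟫_ℝ)
    (hmax : ∀ T' : EuclideanSpace ℝ (Fin n) → Set (EuclideanSpace ℝ (Fin n)),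
      (∀ x y v w, v ∈ T' x → w ∈ T' y → 0 ≤ ⟪v - w, x - y⟫_ℝ) →
      (∀ x, T x ⊆ T' x) → ∀ x, T' x = T x)
    (hdom : {x | (T x).Nonempty} = Ω) :
    (({x : (EuclideanSpace ℝ (Fin n)) |
        x ∈ Ω ∧ ∃ v ∈ T x, ∀ z ∈ Ω, 0 ≤ ⟪v, z - x⟫_ℝ}).Nonempty ∧
      Bornology.IsBounded {x : (EuclideanSpace ℝ (Fin n)) |
        x ∈ Ω ∧ ∃ v ∈ T x, ∀ z ∈ Ω, 0 ≤ ⟪v, z - x⟫_ℝ}) ↔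
    (∀ w : EuclideanSpace ℝ (Fin n),
      (∀ x ∈ Ω, ∀ τ : ℝ, 0 ≤ τ → x + τ • w ∈ Ω) → w ≠ 0 →
      ∃ x ∈ Ω, ∃ v ∈ T x, 0 < ⟪v, w⟫_ℝ) := by
  have hT : IsMaximalMonotoneOperator T := ⟨hmono, hmax⟩
  have hsol : {x | x ∈ Ω ∧ ∃ v ∈ T x, ∀ z ∈ Ω, 0 ≤ ⟪v, z - x⟫_ℝ} = {x | 0 ∈ T x} :=
    Set.ext fun x => hT.zero_mem_iff hdom.subset
  rw [hsol]
  constructor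
  · rintro ⟨⟨x, hx⟩, hbdd⟩ w hw hw₀
    by_contra! hneg
    exact hw₀ (hbdd.eq_zero_of_add_smul_mem fun τ hτ =>
      hT.zero_mem_add_smul hx (fun y u hu => hneg y (hdom.subset ⟨u, hu⟩) u hu) hτ)
  · intro h
    have hb := hT.1.isBounded_setOf_neg_smul_mem hcl hconv hdom.subset h
    refine ⟨hT.exists_zero_mem hb, hb.subset fun x hx => ?_⟩
    exact ⟨0, ⟨le_rfl, zero_le_one⟩, by simpa using hx⟩
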